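/- Let Ω ⊆ D be an open set and fix a > 1, with E_n = {z ∈ ℂ : a^n ≤ log(1/|z|) ≤ a^{n+1}} \ Ω for n ≥ 1. Then the series ∑_{n=1}^∞ a^{-n} C_h(E_n) converges if and only if the series ∑_{n=1}^∞ a^{n} C_g(E_n) converges. (Equivalence of conditions (5) and (8) of Theorem 1.1 for the Laplacian: the h-capacity Wiener series and the classical Greenian-capacity Wiener series converge or diverge together.) -/

import Mathlib

/-
On `E_n` the weight `h` lies between `a^n` and `a^(n+1)`, so for a measure carried by `E_n`
the `h`-potential and the Green potential differ by a factor of order `a^n`. The two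
normalisations (potential `≤ h` on `D`, potential `≤ 1` on `Σ`) are then compared by bounding
the mass of an admissible measure: testing the `h`-potential at a point deep inside the hole of
the annulus gives mass `O(a^n)`, and testing the Green potential at `0`, where
`G(0, w) = h(w)`, gives mass `≤ a^(-n)`. Elementary estimates of `G(z, w)` when `|z|` and
`|w|` are far apart finish the comparison `C_h(E_n) ≍ a^(2n) C_g(E_n)`, with constants
depending only on `a`, so the two series are termwise comparable.
-/

open MeasureTheory Filter Set
open scoped ENNReal Topology

noncomputable section

/-- The open unit disk `Σ = {z : |z| < 1}` in `ℂ`. -/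
def unitDisk : Set ℂ := {z : ℂ | ‖z‖ < 1}

/-- The punctured open unit disk `D = Σ \ {0}`. -/
def puncDisk : Set ℂ := unitDisk \ {0}

/-- `h(z) = log (1/|z|)`. -/
def hker (z : ℂ) : ℝ := Real.log (1 / ‖z‖)

/-- The Green function of the Laplacian on the unit disk,
`G(z,w) = log(|1 - z·conj w| / |z - w|)`, with value `+∞` on the diagonal. -/
def greenFn (z w : ℂ) : ℝ≥0∞ :=
  if z = w then ⊤
  else ENNReal.ofReal (Real.log (‖1 - z * (starRingEnd ℂ) w‖ / ‖z - w‖))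

/-- The `h`-potential of a measure `μ`: `z ↦ ∫ G(z,w)/h(w) dμ(w)`. -/
def hPotential (μ : Measure ℂ) (z : ℂ) : ℝ≥0∞ :=
  ∫⁻ w, greenFn z w / ENNReal.ofReal (hker w) ∂μ

/-- The `h`-capacity of a set `K`: the supremum of total masses `μ(K)` over finite Borel
measures supported in `K` whose `h`-potential is dominated by `h` on `D`. -/
def capH (K : Set ℂ) : ℝ≥0∞ :=
  sSup { m : ℝ≥0∞ | ∃ μ : Measure ℂ, IsFiniteMeasure μ ∧ μ Kᶜ = 0 ∧
    (∀ z ∈ puncDisk, hPotential μ z ≤ ENNReal.ofReal (hker z)) ∧ m = μ K }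

/-- The Greenian potential of a measure: `z ↦ ∫ G(z,w) dμ(w)`. -/
def gPotential (μ : Measure ℂ) (z : ℂ) : ℝ≥0∞ :=
  ∫⁻ w, greenFn z w ∂μ

/-- The Greenian capacity of a set `K ⊆ Σ`: the supremum of total masses `μ(K)` over finite
Borel measures supported in `K` whose Greenian potential is dominated by `1` on `Σ`. -/
def capG (K : Set ℂ) : ℝ≥0∞ :=
  sSup { m : ℝ≥0∞ | ∃ μ : Measure ℂ, IsFiniteMeasure μ ∧ μ Kᶜ = 0 ∧
    (∀ z ∈ unitDisk, gPotential μ z ≤ 1) ∧ m = μ K }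

-- On the diagonal the value is junk (`log (x / 0) = 0`), whereas `greenFn z z = ⊤`.
def greenReal (z w : ℂ) : ℝ := Real.log (‖1 - z * starRingEnd ℂ w‖ / ‖z - w‖)

lemma greenFn_of_ne {z w : ℂ} (h : z ≠ w) : greenFn z w = ENNReal.ofReal (greenReal z w) :=
  if_neg h

lemma greenReal_comm (z w : ℂ) : greenReal z w = greenReal w z := by
  have : ‖1 - z * starRingEnd ℂ w‖ = ‖1 - w * starRingEnd ℂ z‖ := by
    rw [← Complex.norm_conj, map_sub, map_one, map_mul, Complex.conj_conj, mul_comm]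
  rw [greenReal, greenReal, this, norm_sub_rev z w]

lemma norm_one_sub_mul_conj_sq (z w : ℂ) :
    ‖1 - z * starRingEnd ℂ w‖ ^ 2 = ‖z - w‖ ^ 2 + (1 - ‖z‖ ^ 2) * (1 - ‖w‖ ^ 2) := by
  simp only [Complex.sq_norm, Complex.normSq_apply, Complex.sub_re, Complex.sub_im,
    Complex.mul_re, Complex.mul_im, Complex.conj_re, Complex.conj_im, Complex.one_re,
    Complex.one_im]
  ring

lemma hker_eq_neg_log (z : ℂ) : hker z = -Real.log ‖z‖ := by
  rw [hker, one_div, Real.log_inv]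

lemma ne_zero_of_hker_pos {z : ℂ} (h : 0 < hker z) : z ≠ 0 := by
  rintro rfl
  simp [hker] at h

lemma norm_eq_exp_neg_hker {z : ℂ} (hz : z ≠ 0) : ‖z‖ = Real.exp (-hker z) := by
  rw [hker_eq_neg_log, neg_neg, Real.exp_log (norm_pos_iff.mpr hz)]

lemma norm_le_exp_neg_of_le_hker {z : ℂ} {c : ℝ} (h : c ≤ hker z) : ‖z‖ ≤ Real.exp (-c) := by
  rcases eq_or_ne z 0 with rfl | hz
  · rw [norm_zero]; positivity
  rw [norm_eq_exp_neg_hker hz]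
  exact Real.exp_le_exp.mpr (by linarith)

lemma exp_neg_le_norm_of_hker_le {z : ℂ} {c : ℝ} (hz : z ≠ 0) (h : hker z ≤ c) :
    Real.exp (-c) ≤ ‖z‖ := by
  rw [norm_eq_exp_neg_hker hz]
  exact Real.exp_le_exp.mpr (by linarith)

lemma hker_lt_of_exp_neg_lt_norm {z : ℂ} {c : ℝ} (h : Real.exp (-c) < ‖z‖) : hker z < c := by
  rw [hker_eq_neg_log, neg_lt]
  simpa using Real.log_lt_log (Real.exp_pos _) h

lemma norm_le_of_hker_add_le {z w : ℂ} {c : ℝ} (hw : w ≠ 0) (h : hker w + c ≤ hker z) :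
    ‖z‖ ≤ ‖w‖ * Real.exp (-c) := by
  rcases eq_or_ne z 0 with rfl | hz
  · rw [norm_zero]; positivity
  rw [norm_eq_exp_neg_hker hz, norm_eq_exp_neg_hker hw, ← Real.exp_add]
  exact Real.exp_le_exp.mpr (by linarith)

lemma hker_pos_of_mem_puncDisk {z : ℂ} (hz : z ∈ puncDisk) : 0 < hker z := by
  rw [hker_eq_neg_log, neg_pos]
  exact Real.log_neg (norm_pos_iff.mpr hz.2) hz.1

lemma exists_mem_puncDisk_hker_eq {t : ℝ} (ht : 0 < t) : ∃ z ∈ puncDisk, hker z = t := by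
  have hker_eq : hker (Real.exp (-t) : ℂ) = t := by
    rw [hker_eq_neg_log, Complex.norm_real, Real.norm_of_nonneg (Real.exp_pos _).le,
      Real.log_exp, neg_neg]
  refine ⟨_, ⟨?_, ne_zero_of_hker_pos (by rwa [hker_eq])⟩, hker_eq⟩
  show ‖((Real.exp (-t) : ℝ) : ℂ)‖ < 1
  rw [Complex.norm_real, Real.norm_of_nonneg (Real.exp_pos _).le]
  exact Real.exp_lt_one_iff.mpr (by linarith)

lemma greenReal_zero_left (w : ℂ) : greenReal 0 w = hker w := by
  simp [greenReal, hker]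

lemma greenReal_le_hker_add_log_two {z w : ℂ} (hw0 : w ≠ 0) (hw : ‖w‖ ≤ 1)
    (hzw : ‖z‖ ≤ ‖w‖ / 2) : greenReal z w ≤ hker w + 2 * Real.log 2 := by
  have hw_pos : 0 < ‖w‖ := norm_pos_iff.mpr hw0
  have hB : ‖w‖ / 2 ≤ ‖z - w‖ := by linarith [norm_sub_norm_le w z, norm_sub_rev z w]
  have hA : ‖1 - z * starRingEnd ℂ w‖ ≤ 2 := by
    have := norm_sub_le (1 : ℂ) (z * starRingEnd ℂ w)
    simp only [norm_one, norm_mul, Complex.norm_conj] at this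
    nlinarith [norm_nonneg z]
  have hlog : Real.log (4 / ‖w‖) = hker w + 2 * Real.log 2 := by
    rw [Real.log_div (by norm_num) hw_pos.ne', hker_eq_neg_log,
      show (4 : ℝ) = 2 ^ 2 by norm_num, Real.log_pow]
    push_cast; ring
  rw [← hlog, greenReal]
  rcases (norm_nonneg (1 - z * starRingEnd ℂ w)).eq_or_lt with hA0 | hA0
  · rw [← hA0, zero_div, Real.log_zero]
    exact Real.log_nonneg ((one_le_div hw_pos).mpr (by linarith))
  · refine Real.log_le_log (div_pos hA0 (by linarith)) ?_
    calc ‖1 - z * starRingEnd ℂ w‖ / ‖z - w‖ ≤ 2 / (‖w‖ / 2) :=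
          div_le_div₀ (by norm_num) hA (by positivity) hB
      _ = 4 / ‖w‖ := by field_simp; norm_num

lemma greenReal_le_one_sub_sq_div {z w : ℂ} (hz : ‖z‖ ≤ 1) (hw : ‖w‖ ≤ 1) (hzw : z ≠ w) :
    greenReal z w ≤ (1 - ‖z‖ ^ 2) / (2 * ‖z - w‖ ^ 2) := by
  set A := ‖1 - z * starRingEnd ℂ w‖
  set B := ‖z - w‖
  have hB : 0 < B := norm_pos_iff.mpr (sub_ne_zero.mpr hzw)
  have hid : A ^ 2 = B ^ 2 + (1 - ‖z‖ ^ 2) * (1 - ‖w‖ ^ 2) := norm_one_sub_mul_conj_sq z w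
  have hz2 : 0 ≤ 1 - ‖z‖ ^ 2 := by nlinarith [norm_nonneg z]
  have hw2 : 0 ≤ 1 - ‖w‖ ^ 2 := by nlinarith [norm_nonneg w]
  have hD : (1 - ‖z‖ ^ 2) * (1 - ‖w‖ ^ 2) ≤ 1 - ‖z‖ ^ 2 :=
    mul_le_of_le_one_right hz2 (by nlinarith [norm_nonneg w])
  have hA : 0 < A := by
    have hA0 : 0 ≤ A := norm_nonneg _
    nlinarith [mul_nonneg hz2 hw2]
  have key : 2 * greenReal z w ≤ (A / B) ^ 2 - 1 := by
    have h := Real.log_le_sub_one_of_pos (by positivity : 0 < (A / B) ^ 2)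
    rwa [Real.log_pow, Nat.cast_ofNat] at h
  have hsq : (A / B) ^ 2 - 1 ≤ (1 - ‖z‖ ^ 2) / B ^ 2 := by
    rw [div_pow, hid, add_div, div_self (by positivity)]
    linarith [div_le_div_of_nonneg_right hD (sq_nonneg B)]
  rw [le_div_iff₀ (by positivity)]
  have := (le_div_iff₀ (by positivity : (0:ℝ) < B ^ 2)).mp (key.trans hsq)
  linarith

lemma greenReal_le_sixteen_mul_hker {z w : ℂ} (hz : z ∈ puncDisk) (hwz : ‖w‖ ≤ ‖z‖ / 2) :
    greenReal z w ≤ 16 * hker z := by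
  have hz0 : 0 < ‖z‖ := norm_pos_iff.mpr hz.2
  have hz1 : ‖z‖ < 1 := hz.1
  have hlog : 1 - ‖z‖ ≤ hker z := by
    rw [hker_eq_neg_log]; linarith [Real.log_le_sub_one_of_pos hz0]
  rcases le_or_gt ‖z‖ (1 / 2) with hsmall | hlarge
  · have hlog2 : Real.log 2 ≤ hker z := by
      rw [hker_eq_neg_log, ← Real.log_inv]
      exact Real.log_le_log (by norm_num) (by rw [le_inv_comm₀ (by norm_num) hz0]; linarith)
    have := greenReal_le_hker_add_log_two hz.2 hz1.le hwz
    rw [greenReal_comm]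
    linarith [Real.log_nonneg (by norm_num : (1:ℝ) ≤ 2)]
  · have hB : 1 / 4 ≤ ‖z - w‖ := by linarith [norm_sub_norm_le z w]
    have hzw : z ≠ w := by
      rintro rfl; linarith
    calc greenReal z w ≤ (1 - ‖z‖ ^ 2) / (2 * ‖z - w‖ ^ 2) :=
          greenReal_le_one_sub_sq_div hz1.le (by linarith) hzw
      _ ≤ (1 - ‖z‖ ^ 2) / (2 * (1 / 4) ^ 2) := by
          gcongr
          nlinarith [norm_nonneg z]
      _ ≤ 16 * hker z := by rw [div_le_iff₀ (by norm_num)]; nlinarith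

lemma hker_sub_half_le_greenReal {z w : ℂ} (hw0 : w ≠ 0) (hw : ‖w‖ ≤ 2 / 5)
    (hzw : ‖z‖ ≤ 2 / 5 * ‖w‖) : hker w - 1 / 2 ≤ greenReal z w := by
  have hw_pos : 0 < ‖w‖ := norm_pos_iff.mpr hw0
  have hA : 117 / 125 ≤ ‖1 - z * starRingEnd ℂ w‖ := by
    have := norm_sub_norm_le (1 : ℂ) (z * starRingEnd ℂ w)
    simp only [norm_one, norm_mul, Complex.norm_conj] at this
    nlinarith [norm_nonneg z]
  have hB0 : 0 < ‖z - w‖ := by linarith [norm_sub_norm_le w z, norm_sub_rev z w]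
  have hB : ‖z - w‖ ≤ 7 / 5 * ‖w‖ := by linarith [norm_sub_le z w]
  have hlogA : -(8 / 117) ≤ Real.log ‖1 - z * starRingEnd ℂ w‖ := by
    have := Real.one_sub_inv_le_log_of_pos (by norm_num : (0:ℝ) < 117 / 125)
    have := Real.log_le_log (by norm_num) hA
    norm_num at *; linarith
  have hlogB : Real.log ‖z - w‖ ≤ 2 / 5 + Real.log ‖w‖ := by
    have h75 := Real.log_le_sub_one_of_pos (by norm_num : (0:ℝ) < 7 / 5)
    have := Real.log_le_log hB0 hB
    rw [Real.log_mul (by norm_num) hw_pos.ne'] at this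
    linarith
  rw [greenReal, Real.log_div (by linarith) hB0.ne', hker_eq_neg_log]
  linarith

lemma exp_neg_one_le_two_fifths : Real.exp (-1) ≤ 2 / 5 := by
  linarith [Real.exp_neg_one_lt_d9]

lemma greenFn_div_hker {z w : ℂ} (hzw : z ≠ w) (hw : 0 < hker w) :
    greenFn z w / ENNReal.ofReal (hker w) = ENNReal.ofReal (greenReal z w / hker w) := by
  rw [greenFn_of_ne hzw, ENNReal.ofReal_div_of_pos hw]

lemma hPotential_smul (c : ℝ≥0∞) (μ : Measure ℂ) (z : ℂ) :
    hPotential (c • μ) z = c * hPotential μ z := by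
  rw [hPotential, hPotential, lintegral_smul_measure, smul_eq_mul]

lemma gPotential_smul (c : ℝ≥0∞) (μ : Measure ℂ) (z : ℂ) :
    gPotential (c • μ) z = c * gPotential μ z := by
  rw [gPotential, gPotential, lintegral_smul_measure, smul_eq_mul]

section Capacity

variable {K : Set ℂ} {μ : Measure ℂ}

lemma le_capH_of_hPotential_le [IsFiniteMeasure μ] (hμ : μ Kᶜ = 0) {c : ℝ≥0∞} (hc0 : c ≠ 0)
    (hc : c ≠ ⊤) (hpot : ∀ z ∈ puncDisk, hPotential μ z ≤ c * ENNReal.ofReal (hker z)) :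
    μ K ≤ c * capH K := by
  have hscaled : c⁻¹ * μ K ≤ capH K := by
    refine le_sSup ⟨c⁻¹ • μ, μ.smul_finite (ENNReal.inv_ne_top.mpr hc0),
      by simp [hμ], fun z hz => ?_, by simp⟩
    rw [hPotential_smul, ← ENNReal.inv_mul_cancel_left (b := ENNReal.ofReal (hker z)) hc0 hc]
    gcongr
    exact hpot z hz
  calc μ K = c * (c⁻¹ * μ K) := (ENNReal.mul_inv_cancel_left hc0 hc).symm
    _ ≤ c * capH K := by gcongr

lemma le_capG_of_gPotential_le [IsFiniteMeasure μ] (hμ : μ Kᶜ = 0) {c : ℝ≥0∞} (hc0 : c ≠ 0)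
    (hc : c ≠ ⊤) (hpot : ∀ z ∈ unitDisk, gPotential μ z ≤ c) : μ K ≤ c * capG K := by
  have hscaled : c⁻¹ * μ K ≤ capG K := by
    refine le_sSup ⟨c⁻¹ • μ, μ.smul_finite (ENNReal.inv_ne_top.mpr hc0),
      by simp [hμ], fun z hz => ?_, by simp⟩
    rw [gPotential_smul, ← ENNReal.inv_mul_cancel hc0 hc]
    gcongr
    exact hpot z hz
  calc μ K = c * (c⁻¹ * μ K) := (ENNReal.mul_inv_cancel_left hc0 hc).symm
    _ ≤ c * capG K := by gcongr

lemma gPotential_le_mul_measure_univ {z : ℂ} {c : ℝ≥0∞} (h : ∀ᵐ w ∂μ, greenFn z w ≤ c) :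
    gPotential μ z ≤ c * μ univ :=
  (lintegral_mono_ae h).trans_eq (lintegral_const c)

lemma gPotential_le_mul_hPotential {U : ℝ} (hK : ∀ w ∈ K, 0 < hker w ∧ hker w ≤ U)
    (hμ : μ Kᶜ = 0) (z : ℂ) : gPotential μ z ≤ ENNReal.ofReal U * hPotential μ z := by
  rw [hPotential, ← lintegral_const_mul' _ _ ENNReal.ofReal_ne_top]
  refine lintegral_mono_ae ?_
  filter_upwards [mem_ae_iff.mpr hμ] with w hw
  have hpos : ENNReal.ofReal (hker w) ≠ 0 := (ENNReal.ofReal_pos.mpr (hK w hw).1).ne'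
  calc greenFn z w = greenFn z w / ENNReal.ofReal (hker w) * ENNReal.ofReal (hker w) :=
        (ENNReal.div_mul_cancel hpos ENNReal.ofReal_ne_top).symm
    _ ≤ ENNReal.ofReal U * (greenFn z w / ENNReal.ofReal (hker w)) := by
        rw [mul_comm]; gcongr; exact (hK w hw).2

lemma hPotential_le_mul_gPotential {L : ℝ} (hL : 0 < L) (hK : ∀ w ∈ K, L ≤ hker w)
    (hμ : μ Kᶜ = 0) (z : ℂ) : hPotential μ z ≤ ENNReal.ofReal L⁻¹ * gPotential μ z := by
  rw [gPotential, ← lintegral_const_mul' _ _ ENNReal.ofReal_ne_top]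
  refine lintegral_mono_ae ?_
  filter_upwards [mem_ae_iff.mpr hμ] with w hw
  calc greenFn z w / ENNReal.ofReal (hker w) ≤ greenFn z w / ENNReal.ofReal L := by
        gcongr; exact hK w hw
    _ = ENNReal.ofReal L⁻¹ * greenFn z w := by
        rw [ENNReal.div_eq_inv_mul, ENNReal.ofReal_inv_of_pos hL]

end Capacity

section Comparison

variable {K : Set ℂ} {μ : Measure ℂ}

lemma norm_le_two_fifths_mul {z w : ℂ} {U : ℝ} (hw0 : w ≠ 0) (hw : hker w ≤ U)
    (hz : ‖z‖ ≤ Real.exp (-(U + 1))) : ‖z‖ ≤ 2 / 5 * ‖w‖ :=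
  calc ‖z‖ ≤ Real.exp (-(U + 1)) := hz
    _ = Real.exp (-U) * Real.exp (-1) := by rw [← Real.exp_add]; ring_nf
    _ ≤ ‖w‖ * (2 / 5) :=
        mul_le_mul (exp_neg_le_norm_of_hker_le hw0 hw) exp_neg_one_le_two_fifths
          (Real.exp_pos _).le (norm_nonneg _)
    _ = 2 / 5 * ‖w‖ := mul_comm _ _

-- The test point `z₀` with `h(z₀) = U + 1` sits well inside the hole of the annulus, where
-- `G(z₀, w) ≥ h(w) - 1/2 ≥ h(w)/2`.
lemma measure_univ_le_of_hPotential_le {U : ℝ} (hU : 1 ≤ U)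
    (hK : ∀ w ∈ K, 1 ≤ hker w ∧ hker w ≤ U) (hμ : μ Kᶜ = 0)
    (hpot : ∀ z ∈ puncDisk, hPotential μ z ≤ ENNReal.ofReal (hker z)) :
    μ univ ≤ ENNReal.ofReal (4 * U) := by
  obtain ⟨z₀, hz₀, hkz₀⟩ := exists_mem_puncDisk_hker_eq (t := U + 1) (by linarith)
  have hlower : ∀ᵐ w ∂μ, ENNReal.ofReal (1 / 2) ≤ greenFn z₀ w / ENNReal.ofReal (hker w) := by
    filter_upwards [mem_ae_iff.mpr hμ] with w hw
    obtain ⟨h1, h2⟩ := hK w hw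
    have hw0 : w ≠ 0 := ne_zero_of_hker_pos (by linarith)
    have hz₀w := norm_le_two_fifths_mul hw0 h2 (norm_le_exp_neg_of_le_hker hkz₀.ge)
    have hne : z₀ ≠ w :=
      ne_of_apply_ne norm (by linarith [norm_pos_iff.mpr hw0] : ‖z₀‖ ≠ ‖w‖)
    have hw25 : ‖w‖ ≤ 2 / 5 := (norm_le_exp_neg_of_le_hker h1).trans exp_neg_one_le_two_fifths
    have hgreen := hker_sub_half_le_greenReal hw0 hw25 hz₀w
    rw [greenFn_div_hker hne (by linarith)]
    exact ENNReal.ofReal_le_ofReal ((le_div_iff₀ (by linarith)).mpr (by linarith))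
  calc μ univ = ENNReal.ofReal 2 * (ENNReal.ofReal (1 / 2) * μ univ) := by
        rw [← mul_assoc, ← ENNReal.ofReal_mul (by norm_num)]; norm_num
    _ ≤ ENNReal.ofReal 2 * hPotential μ z₀ := by
        gcongr
        exact (lintegral_const _).symm.trans_le (lintegral_mono_ae hlower)
    _ ≤ ENNReal.ofReal 2 * ENNReal.ofReal (U + 1) := by
        gcongr
        exact hkz₀ ▸ hpot z₀ hz₀
    _ ≤ ENNReal.ofReal (4 * U) := by
        rw [← ENNReal.ofReal_mul (by norm_num)]
        exact ENNReal.ofReal_le_ofReal (by linarith)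

lemma gPotential_le_of_hPotential_le {U : ℝ} (hU : 1 ≤ U)
    (hK : ∀ w ∈ K, 1 ≤ hker w ∧ hker w ≤ U) (hμ : μ Kᶜ = 0)
    (hpot : ∀ z ∈ puncDisk, hPotential μ z ≤ ENNReal.ofReal (hker z)) (z : ℂ)
    (hz : z ∈ unitDisk) : gPotential μ z ≤ ENNReal.ofReal (12 * U ^ 2) := by
  rcases le_or_gt ‖z‖ (Real.exp (-(U + 1))) with hdeep | hfar
  · have hgreen : ∀ᵐ w ∂μ, greenFn z w ≤ ENNReal.ofReal (3 * U) := by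
      filter_upwards [mem_ae_iff.mpr hμ] with w hw
      obtain ⟨h1, h2⟩ := hK w hw
      have hw0 : w ≠ 0 := ne_zero_of_hker_pos (by linarith)
      have hzw : ‖z‖ ≤ ‖w‖ / 2 := by
        linarith [norm_le_two_fifths_mul hw0 h2 hdeep, norm_nonneg w]
      have hne : z ≠ w :=
        ne_of_apply_ne norm (by linarith [norm_pos_iff.mpr hw0] : ‖z‖ ≠ ‖w‖)
      have hw1 : ‖w‖ ≤ 1 :=
        (norm_le_exp_neg_of_le_hker h1).trans (Real.exp_le_one_iff.mpr (by norm_num))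
      rw [greenFn_of_ne hne]
      refine ENNReal.ofReal_le_ofReal ?_
      linarith [greenReal_le_hker_add_log_two hw0 hw1 hzw, Real.log_two_lt_d9]
    calc gPotential μ z ≤ ENNReal.ofReal (3 * U) * μ univ := gPotential_le_mul_measure_univ hgreen
      _ ≤ ENNReal.ofReal (3 * U) * ENNReal.ofReal (4 * U) := by
          gcongr; exact measure_univ_le_of_hPotential_le hU hK hμ hpot
      _ = ENNReal.ofReal (12 * U ^ 2) := by
          rw [← ENNReal.ofReal_mul (by linarith)]; ring_nf
  · have hz' : z ∈ puncDisk :=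
      ⟨hz, norm_pos_iff.mp ((Real.exp_pos _).trans hfar)⟩
    calc gPotential μ z ≤ ENNReal.ofReal U * hPotential μ z :=
          gPotential_le_mul_hPotential (fun w hw => ⟨by linarith [hK w hw], (hK w hw).2⟩) hμ z
      _ ≤ ENNReal.ofReal U * ENNReal.ofReal (U + 1) := by
          gcongr
          exact (hpot z hz').trans
            (ENNReal.ofReal_le_ofReal (hker_lt_of_exp_neg_lt_norm hfar).le)
      _ ≤ ENNReal.ofReal (12 * U ^ 2) := by
          rw [← ENNReal.ofReal_mul (by linarith)]
          exact ENNReal.ofReal_le_ofReal (by nlinarith)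

lemma capH_le_capG {U : ℝ} (hU : 1 ≤ U) (hK : ∀ w ∈ K, 1 ≤ hker w ∧ hker w ≤ U) :
    capH K ≤ ENNReal.ofReal (12 * U ^ 2) * capG K := by
  refine sSup_le ?_
  rintro _ ⟨μ, hfin, hμ, hpot, rfl⟩
  exact le_capG_of_gPotential_le hμ (ENNReal.ofReal_pos.mpr (by positivity)).ne'
    ENNReal.ofReal_ne_top (gPotential_le_of_hPotential_le hU hK hμ hpot)

lemma measure_univ_le_of_gPotential_zero_le {L : ℝ} (hL : 0 < L) (hK : ∀ w ∈ K, L ≤ hker w)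
    (hμ : μ Kᶜ = 0) (hpot : gPotential μ 0 ≤ 1) : μ univ ≤ ENNReal.ofReal L⁻¹ := by
  have hgreen : ∀ᵐ w ∂μ, ENNReal.ofReal L ≤ greenFn 0 w := by
    filter_upwards [mem_ae_iff.mpr hμ] with w hw
    have hw0 : w ≠ 0 := ne_zero_of_hker_pos (hL.trans_le (hK w hw))
    rw [greenFn_of_ne hw0.symm, greenReal_zero_left]
    exact ENNReal.ofReal_le_ofReal (hK w hw)
  rw [ENNReal.ofReal_inv_of_pos hL, ENNReal.le_inv_iff_mul_le, mul_comm]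
  calc ENNReal.ofReal L * μ univ = ∫⁻ _, ENNReal.ofReal L ∂μ := (lintegral_const _).symm
    _ ≤ gPotential μ 0 := lintegral_mono_ae hgreen
    _ ≤ 1 := hpot

-- Where `h(z) < L/4`, the support of `μ` lies in `|w| ≤ |z|/2`, so `G(z, ·) ≤ 16 h(z)` on it;
-- where `h(z) ≥ L/4`, the bound `1/L` of the `h`-potential is already `≤ 4 h(z)/L²`.
lemma hPotential_le_of_gPotential_le {L : ℝ} (hL : 1 ≤ L) (hK : ∀ w ∈ K, L ≤ hker w)
    (hμ : μ Kᶜ = 0) (hpot : ∀ z ∈ unitDisk, gPotential μ z ≤ 1) (z : ℂ) (hz : z ∈ puncDisk) :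
    hPotential μ z ≤ ENNReal.ofReal (16 / L ^ 2) * ENNReal.ofReal (hker z) := by
  have hL0 : 0 < L := by linarith
  have hcmp := hPotential_le_mul_gPotential hL0 hK hμ z
  rw [← ENNReal.ofReal_mul (by positivity)]
  rcases le_or_gt (L / 4) (hker z) with hnear | hfar
  · calc hPotential μ z ≤ ENNReal.ofReal L⁻¹ * 1 := hcmp.trans (by gcongr; exact hpot z hz.1)
      _ ≤ ENNReal.ofReal (16 / L ^ 2 * hker z) := by
          rw [mul_one]
          refine ENNReal.ofReal_le_ofReal ?_
          rw [inv_eq_one_div, div_le_iff₀ hL0]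
          calc (1 : ℝ) ≤ 16 / L ^ 2 * (L / 4) * L := by field_simp; nlinarith
            _ ≤ 16 / L ^ 2 * hker z * L := by gcongr
  · have hgreen : ∀ᵐ w ∂μ, greenFn z w ≤ ENNReal.ofReal (16 * hker z) := by
      filter_upwards [mem_ae_iff.mpr hμ] with w hw
      have hsep : hker z + Real.log 2 ≤ hker w := by
        linarith [hK w hw, Real.log_two_lt_d9]
      have hwz : ‖w‖ ≤ ‖z‖ / 2 := by
        simpa [Real.exp_neg, Real.exp_log, div_eq_mul_inv] using norm_le_of_hker_add_le hz.2 hsep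
      have hne : z ≠ w := by
        rintro rfl; linarith [norm_pos_iff.mpr hz.2]
      rw [greenFn_of_ne hne]
      exact ENNReal.ofReal_le_ofReal (greenReal_le_sixteen_mul_hker hz hwz)
    calc hPotential μ z
        ≤ ENNReal.ofReal L⁻¹ * (ENNReal.ofReal (16 * hker z) * ENNReal.ofReal L⁻¹) := by
          refine hcmp.trans ?_
          gcongr
          have hmass :=
            measure_univ_le_of_gPotential_zero_le hL0 hK hμ (hpot 0 (by simp [unitDisk]))
          exact (gPotential_le_mul_measure_univ hgreen).trans (by gcongr)
      _ = ENNReal.ofReal (16 / L ^ 2 * hker z) := by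
          have hkz := hker_pos_of_mem_puncDisk hz
          rw [← ENNReal.ofReal_mul (by positivity), ← ENNReal.ofReal_mul (by positivity)]
          congr 1; field_simp

lemma capG_le_capH {L : ℝ} (hL : 1 ≤ L) (hK : ∀ w ∈ K, L ≤ hker w) :
    capG K ≤ ENNReal.ofReal (16 / L ^ 2) * capH K := by
  refine sSup_le ?_
  rintro _ ⟨μ, hfin, hμ, hpot, rfl⟩
  exact le_capH_of_hPotential_le hμ (ENNReal.ofReal_pos.mpr (by positivity)).ne'
    ENNReal.ofReal_ne_top (hPotential_le_of_gPotential_le hL hK hμ hpot)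

end Comparison

lemma ENNReal.tsum_ne_top_of_le_mul {f g : ℕ → ℝ≥0∞} {c : ℝ≥0∞} (hc : c ≠ ⊤)
    (hfg : ∀ n, f n ≤ c * g n) (hg : ∑' n, g n ≠ ⊤) : ∑' n, f n ≠ ⊤ :=
  ne_top_of_le_ne_top (ENNReal.mul_ne_top hc hg)
    ((ENNReal.tsum_le_tsum hfg).trans_eq ENNReal.tsum_mul_left)

lemma Real.rpow_neg_natCast_add_one {a : ℝ} (ha : 0 ≤ a) (n : ℕ) :
    a ^ (-(n + 1 : ℝ)) = (a ^ (n + 1))⁻¹ := by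
  rw [Real.rpow_neg ha, ← Real.rpow_natCast]
  push_cast; rfl

lemma rpow_neg_mul_capH_le {a : ℝ} (ha : 1 < a) (n : ℕ) {K : Set ℂ}
    (hK : ∀ w ∈ K, a ^ (n + 1) ≤ hker w ∧ hker w ≤ a ^ (n + 2)) :
    ENNReal.ofReal (a ^ (-(n + 1 : ℝ))) * capH K ≤
      ENNReal.ofReal (12 * a ^ 2) * (ENNReal.ofReal (a ^ (n + 1)) * capG K) := by
  have ha0 : 0 < a := by linarith
  calc ENNReal.ofReal (a ^ (-(n + 1 : ℝ))) * capH K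
      ≤ ENNReal.ofReal (a ^ (-(n + 1 : ℝ))) *
          (ENNReal.ofReal (12 * (a ^ (n + 2)) ^ 2) * capG K) := by
        gcongr
        exact capH_le_capG (one_le_pow₀ ha.le)
          fun w hw => ⟨(one_le_pow₀ ha.le).trans (hK w hw).1, (hK w hw).2⟩
    _ = ENNReal.ofReal (12 * a ^ 2) * (ENNReal.ofReal (a ^ (n + 1)) * capG K) := by
        rw [Real.rpow_neg_natCast_add_one ha0.le, ← mul_assoc, ← mul_assoc,
          ← ENNReal.ofReal_mul (by positivity), ← ENNReal.ofReal_mul (by positivity)]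
        congr 2
        field_simp
        ring

lemma pow_mul_capG_le {a : ℝ} (ha : 1 < a) (n : ℕ) {K : Set ℂ}
    (hK : ∀ w ∈ K, a ^ (n + 1) ≤ hker w) :
    ENNReal.ofReal (a ^ (n + 1)) * capG K ≤
      ENNReal.ofReal 16 * (ENNReal.ofReal (a ^ (-(n + 1 : ℝ))) * capH K) := by
  have ha0 : 0 < a := by linarith
  calc ENNReal.ofReal (a ^ (n + 1)) * capG K
      ≤ ENNReal.ofReal (a ^ (n + 1)) * (ENNReal.ofReal (16 / (a ^ (n + 1)) ^ 2) * capH K) := by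
        gcongr
        exact capG_le_capH (one_le_pow₀ ha.le) hK
    _ = ENNReal.ofReal 16 * (ENNReal.ofReal (a ^ (-(n + 1 : ℝ))) * capH K) := by
        rw [Real.rpow_neg_natCast_add_one ha0.le, ← mul_assoc, ← mul_assoc,
          ← ENNReal.ofReal_mul (by positivity), ← ENNReal.ofReal_mul (by positivity)]
        congr 2
        field_simp

theorem wiener_series_h_iff_wiener_series_green_general
    (Ω : Set ℂ)
    (a : ℝ) (ha : 1 < a) (E : ℕ → Set ℂ)
    (hEdef : ∀ n : ℕ, E n =
      {z : ℂ | a ^ n ≤ Real.log (1 / ‖z‖) ∧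
        Real.log (1 / ‖z‖) ≤ a ^ (n + 1)} \ Ω) :
    (∑' n : ℕ, ENNReal.ofReal (a ^ (-(n + 1 : ℝ))) * capH (E (n + 1)) ≠ ⊤) ↔
      (∑' n : ℕ, ENNReal.ofReal (a ^ (n + 1)) * capG (E (n + 1)) ≠ ⊤) := by
  have hE : ∀ n, ∀ w ∈ E (n + 1), a ^ (n + 1) ≤ hker w ∧ hker w ≤ a ^ (n + 2) := by
    intro n w hw
    rw [hEdef] at hw
    exact hw.1
  constructor
  · exact ENNReal.tsum_ne_top_of_le_mul ENNReal.ofReal_ne_top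
      fun n => pow_mul_capG_le ha n fun w hw => (hE n w hw).1
  · exact ENNReal.tsum_ne_top_of_le_mul ENNReal.ofReal_ne_top
      fun n => rpow_neg_mul_capH_le ha n (hE n)

/-- Equivalence of conditions (5) and (8) of Theorem 1.1: the `h`-capacity Wiener series and
the classical Greenian-capacity Wiener series converge or diverge together. -/
theorem wiener_series_h_iff_wiener_series_green
    (Ω : Set ℂ) (hΩD : Ω ⊆ puncDisk) (hΩopen : IsOpen Ω)
    (a : ℝ) (ha : 1 < a) (E : ℕ → Set ℂ)
    (hEdef : ∀ n : ℕ, E n =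
      {z : ℂ | a ^ n ≤ Real.log (1 / ‖z‖) ∧
        Real.log (1 / ‖z‖) ≤ a ^ (n + 1)} \ Ω) :
    (∑' n : ℕ, ENNReal.ofReal (a ^ (-(n + 1 : ℝ))) * capH (E (n + 1)) ≠ ⊤) ↔
      (∑' n : ℕ, ENNReal.ofReal (a ^ (n + 1)) * capG (E (n + 1)) ≠ ⊤) :=
  wiener_series_h_iff_wiener_series_green_general Ω a ha E hEdef

end
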